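/- arXiv:2402.01414 — 3 statements merged into one kernel-verified Lean document; each statement's English description precedes it below -/
import Mathlib

section
/- Let L be a distributive lattice, A a nonempty set, n ≥ 2, and T : L^n → A a map. Then T is total orderization invariant if and only if T(x_1,...,x_i,...,x_j,...,x_n) = T(x_1,...,x_i ∧ x_j,...,x_i ∨ x_j,...,x_n) for all x_1,...,x_n ∈ L and all i < j in {1,...,n}. -/
def median {L : Type*} [DistribLattice L] {n : ℕ} (k : ℕ) (hk1 : 1 ≤ k) (hkn : k ≤ n)
    (x : Fin n → L) : L :=
  ((Finset.univ.powersetCard (n + 1 - k)).attach).sup'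
    (Finset.attach_nonempty_iff.mpr
      (Finset.powersetCard_nonempty.mpr (by simp [Finset.card_univ]; omega)))
    fun s => s.1.inf'
      (Finset.card_pos.mp (by
        have h := (Finset.mem_powersetCard.mp s.2).2
        omega)) x

def medianInf {L : Type*} [DistribLattice L] {n : ℕ} (k : ℕ) (hk1 : 1 ≤ k) (hkn : k ≤ n)
    (x : Fin n → L) : L :=
  ((Finset.univ.powersetCard (n + 1 - k)).attach).inf'
    (Finset.attach_nonempty_iff.mpr
      (Finset.powersetCard_nonempty.mpr (by simp [Finset.card_univ]; omega)))
    fun s => s.1.sup'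
      (Finset.card_pos.mp (by
        have h := (Finset.mem_powersetCard.mp s.2).2
        omega)) x
def TotalOrderizationInvariant {L : Type*} [DistribLattice L] {A : Type*} {n : ℕ}
    (T : (Fin n → L) → A) : Prop :=
  ∀ x : Fin n → L,
    T x = T fun k => median (k.1 + 1) (Nat.succ_le_succ (Nat.zero_le _)) k.2 x

/-- `T` is symmetric: invariant under every permutation of its arguments. -/
def IsSymmetricMap {L A : Type*} {n : ℕ} (T : (Fin n → L) → A) : Prop :=
  ∀ (σ : Equiv.Perm (Fin n)) (x : Fin n → L), T (x ∘ σ) = T x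

/-!
In a chain the comparator `(xᵢ, xⱼ) ↦ (xᵢ ⊓ xⱼ, xᵢ ⊔ xⱼ)` merely permutes the arguments, so it
preserves the symmetric functions `M_k`. Prime ideals separate the points of a distributive
lattice, so testing against all lattice homomorphisms to `Prop` extends this to every
distributive lattice.
Conversely, a bubble sort built from comparators with `i < j` carries any `x` to a monotone tuple
`y`, whose medians are its own entries; hence `T x = T y = T (M y) = T (M x)`.
-/

theorem Relation.ReflTransGen.preserves {α : Type*} {r : α → α → Prop} {P : α → Prop}
    (hP : ∀ a b, r a b → P a → P b) {a b : α} (h : Relation.ReflTransGen r a b) (ha : P a) :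
    P b := by
  induction h with
  | refl => exact ha
  | tail _ hbc ih => exact hP _ _ hbc ih

theorem Relation.ReflTransGen.apply_eq {α β : Type*} {r : α → α → Prop} {f : α → β}
    (hf : ∀ a b, r a b → f a = f b) {a b : α} (h : Relation.ReflTransGen r a b) : f a = f b :=
  h.preserves (P := fun c => f a = f c) (fun _ _ hbc hac => hac.trans (hf _ _ hbc)) rfl

theorem Fin.monotone_cons {α : Type*} [Preorder α] {n : ℕ} {f : Fin n → α} {a : α} :
    Monotone (Fin.cons a f : Fin (n + 1) → α) ↔ (∀ i, a ≤ f i) ∧ Monotone f := by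
  simpa only [monotone_iff_forall_lt, Relator.LiftFun] using Fin.liftFun_cons (α := α) (· ≤ ·)

open Function

section Comparator

variable {ι L : Type*} [DecidableEq ι] [Lattice L]

def comparator (x : ι → L) (i j : ι) : ι → L :=
  update (update x i (x i ⊓ x j)) j (x i ⊔ x j)

variable {x : ι → L} {i j : ι}

theorem comparator_of_le (h : x i ≤ x j) : comparator x i j = x := by
  rw [comparator, inf_eq_left.mpr h, sup_eq_right.mpr h, update_eq_self, update_eq_self]

theorem comparator_of_ge (h : x j ≤ x i) : comparator x i j = x ∘ Equiv.swap i j := by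
  ext t
  rw [comparator, inf_eq_right.mpr h, sup_eq_left.mpr h]
  by_cases htj : t = j
  · subst htj; simp
  by_cases hti : t = i
  · subst hti; simp [update_of_ne htj]
  · simp [update_of_ne htj, update_of_ne hti, Equiv.swap_apply_of_ne_of_ne hti htj]

theorem comparator_apply_left (h : i ≠ j) : comparator x i j i = x i ⊓ x j := by
  simp [comparator, update_of_ne h]

theorem comp_comparator {M : Type*} [Lattice M] (φ : LatticeHom L M) :
    φ ∘ comparator x i j = comparator (φ ∘ x) i j := by
  simp only [comparator, comp_update, map_inf, map_sup, comp_apply]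

theorem le_comparator {c : L} (hx : ∀ t, c ≤ x t) (t : ι) : c ≤ comparator x i j t := by
  simp only [comparator, update_apply]
  split_ifs
  exacts [(hx i).trans le_sup_left, le_inf (hx i) (hx j), hx t]

end Comparator

section PrimeSeparation

variable {L : Type*} [DistribLattice L]

def Order.Ideal.IsPrime.notMemHom {J : Order.Ideal L} (hJ : J.IsPrime) : LatticeHom L Prop where
  toFun a := a ∉ J
  map_sup' a b := by simp [Order.Ideal.sup_mem_iff, imp_iff_not_or]
  map_inf' a b := by
    refine propext ⟨fun h => ⟨fun ha => h (J.lower inf_le_left ha),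
      fun hb => h (J.lower inf_le_right hb)⟩, fun ⟨ha, hb⟩ hab => ?_⟩
    exact (hJ.mem_or_mem hab).elim ha hb

theorem le_of_forall_latticeHom_prop {a b : L} (h : ∀ φ : LatticeHom L Prop, φ a ≤ φ b) :
    a ≤ b := by
  by_contra hab
  have hdisj : Disjoint (Order.PFilter.principal a : Set L) (Order.Ideal.principal b) :=
    Set.disjoint_left.mpr fun c hac hcb => hab (hac.trans hcb)
  obtain ⟨J, hJ, hbJ, haJ⟩ := DistribLattice.prime_ideal_of_disjoint_filter_ideal hdisj
  exact h hJ.notMemHom (Set.disjoint_left.mp haJ le_rfl) (hbJ le_rfl)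

end PrimeSeparation

section Median

variable {L : Type*} [DistribLattice L] {n k : ℕ} (hk1 : 1 ≤ k) (hkn : k ≤ n)

theorem median_comp_perm_le (σ : Equiv.Perm (Fin n)) (x : Fin n → L) :
    median k hk1 hkn (x ∘ σ) ≤ median k hk1 hkn x := by
  refine Finset.sup'_le _ _ fun s _ => ?_
  have hs : s.1.map σ.toEmbedding ∈ Finset.univ.powersetCard (n + 1 - k) := by
    simpa using (Finset.mem_powersetCard.mp s.2).2
  refine Finset.le_sup'_of_le _ (Finset.mem_attach _ ⟨_, hs⟩)
    (Finset.le_inf' _ _ fun t ht => ?_)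
  obtain ⟨u, hu, rfl⟩ := Finset.mem_map.mp ht
  exact Finset.inf'_le (x ∘ σ) hu

theorem median_comp_perm (σ : Equiv.Perm (Fin n)) (x : Fin n → L) :
    median k hk1 hkn (x ∘ σ) = median k hk1 hkn x := by
  refine (median_comp_perm_le hk1 hkn σ x).antisymm ?_
  simpa [Function.comp_assoc] using median_comp_perm_le hk1 hkn σ⁻¹ (x ∘ σ)

theorem map_median {M : Type*} [DistribLattice M] (φ : LatticeHom L M) (x : Fin n → L) :
    φ (median k hk1 hkn x) = median k hk1 hkn (φ ∘ x) := by
  rw [median, median, map_finset_sup']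
  exact Finset.sup'_congr _ rfl fun s _ => map_finset_inf' φ _ x

theorem median_comparator_of_le_or_ge {x : Fin n → L} {i j : Fin n}
    (h : x i ≤ x j ∨ x j ≤ x i) :
    median k hk1 hkn (comparator x i j) = median k hk1 hkn x := by
  rcases h with h | h
  · rw [comparator_of_le h]
  · rw [comparator_of_ge h, median_comp_perm]

theorem median_comparator (x : Fin n → L) (i j : Fin n) :
    median k hk1 hkn (comparator x i j) = median k hk1 hkn x := by
  have hφ : ∀ φ : LatticeHom L Prop,
      φ (median k hk1 hkn (comparator x i j)) = φ (median k hk1 hkn x) := fun φ => by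
    rw [map_median, map_median, comp_comparator, median_comparator_of_le_or_ge _ _ (le_total _ _)]
  exact le_antisymm (le_of_forall_latticeHom_prop fun φ => (hφ φ).le)
    (le_of_forall_latticeHom_prop fun φ => (hφ φ).ge)

theorem median_of_monotone {y : Fin n → L} (hy : Monotone y) (i : Fin n) :
    median (i.1 + 1) (Nat.le_add_left 1 i) i.2 y = y i := by
  apply le_antisymm
  · refine Finset.sup'_le _ _ fun ⟨s, hs⟩ _ => ?_
    have hcard := (Finset.mem_powersetCard.mp hs).2
    obtain ⟨t, hts, hti⟩ : ∃ t ∈ s, t ≤ i := by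
      by_contra! hgt
      have := Finset.card_le_card fun t ht => Finset.mem_Ioi.mpr (hgt t ht)
      rw [Fin.card_Ioi, hcard] at this
      omega
    exact (Finset.inf'_le _ hts).trans (hy hti)
  · have hs : Finset.Ici i ∈ Finset.univ.powersetCard (n + 1 - (i.1 + 1)) :=
      Finset.mem_powersetCard.mpr ⟨Finset.subset_univ _, by rw [Fin.card_Ici]; omega⟩
    exact Finset.le_sup'_of_le _ (Finset.mem_attach _ ⟨_, hs⟩)
      (Finset.le_inf' _ _ fun t ht => hy (Finset.mem_Ici.mp ht))

end Median

section Sorting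

open Relation

variable {L : Type*} [Lattice L] {n : ℕ}

def ComparatorStep (x y : Fin n → L) : Prop :=
  ∃ i j, i < j ∧ y = comparator x i j

theorem ComparatorStep.cons {x y : Fin n → L} (h : ComparatorStep x y) (c : L) :
    ComparatorStep (Fin.cons c x : Fin (n + 1) → L) (Fin.cons c y) := by
  obtain ⟨i, j, hij, rfl⟩ := h
  refine ⟨i.succ, j.succ, Fin.succ_lt_succ_iff.mpr hij, ?_⟩
  ext t
  induction t using Fin.cases <;>
    simp [comparator, Function.update_apply, (Fin.succ_ne_zero _).symm]

theorem Relation.ReflTransGen.comparatorStep_cons {x y : Fin n → L}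
    (h : ReflTransGen ComparatorStep x y) (c : L) :
    ReflTransGen ComparatorStep (Fin.cons c x : Fin (n + 1) → L) (Fin.cons c y) :=
  h.lift _ fun _ _ hstep => hstep.cons c

theorem exists_reflTransGen_zero_le :
    ∀ {n : ℕ} (x : Fin (n + 1) → L),
      ∃ y, ReflTransGen ComparatorStep x y ∧ ∀ t, y 0 ≤ y t
  | 0, x => ⟨x, .refl, fun t => by rw [Fin.fin_one_eq_zero t]⟩
  | n + 1, x => by
    obtain ⟨y, hxy, hy⟩ := exists_reflTransGen_zero_le (Fin.tail x)
    have hreach : ReflTransGen ComparatorStep x (Fin.cons (x 0) y) := by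
      simpa using hxy.comparatorStep_cons (x 0)
    refine ⟨comparator (Fin.cons (x 0) y) 0 1, hreach.tail ⟨0, 1, Fin.zero_lt_one, rfl⟩,
      fun t => ?_⟩
    rw [comparator_apply_left Fin.zero_ne_one]
    refine le_comparator (fun s => ?_) t
    induction s using Fin.cases with
    | zero => exact inf_le_left
    | succ s => simpa using inf_le_of_right_le (hy s)

theorem exists_reflTransGen_monotone :
    ∀ {n : ℕ} (x : Fin n → L), ∃ y, ReflTransGen ComparatorStep x y ∧ Monotone y
  | 0, x => ⟨x, .refl, fun a => a.elim0⟩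
  | n + 1, x => by
    obtain ⟨y, hxy, hy⟩ := exists_reflTransGen_zero_le x
    obtain ⟨z, hyz, hz⟩ := exists_reflTransGen_monotone (Fin.tail y)
    have hzy : ∀ t, y 0 ≤ z t :=
      hyz.preserves (P := fun u => ∀ t, y 0 ≤ u t)
        (fun _ _ ⟨_, _, _, hstep⟩ hu => hstep ▸ le_comparator hu) (fun t => hy t.succ)
    refine ⟨Fin.cons (y 0) z, hxy.trans ?_, Fin.monotone_cons.mpr ⟨hzy, hz⟩⟩
    simpa using hyz.comparatorStep_cons (y 0)

end Sorting

theorem toi_iff_pairwise_meetJoin_general {L A : Type*} [DistribLattice L]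
    {n : ℕ} (T : (Fin n → L) → A) :
    TotalOrderizationInvariant T ↔
      ∀ (x : Fin n → L) (i j : Fin n), i < j →
        T x = T (Function.update (Function.update x i (x i ⊓ x j)) j (x i ⊔ x j)) := by
  constructor
  · intro hT x i j _
    change T x = T (comparator x i j)
    rw [hT x, hT (comparator x i j)]
    simp only [median_comparator]
  · intro hT x
    obtain ⟨y, hxy, hy⟩ := exists_reflTransGen_monotone x
    have hmedian : ∀ k h1 h2, median k h1 h2 x = median k h1 h2 y := fun k h1 h2 =>
      hxy.apply_eq fun _ _ ⟨_, _, _, hstep⟩ => hstep ▸ (median_comparator ..).symm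
    calc T x = T y := hxy.apply_eq fun _ _ ⟨i, j, hij, hstep⟩ => hstep ▸ hT _ i j hij
      _ = _ := by simp only [hmedian, median_of_monotone hy]

/-- A map on n ≥ 2 variables is total orderization invariant iff it is invariant under
replacing any two arguments x_i, x_j (i < j) by x_i ⊓ x_j and x_i ⊔ x_j. -/
theorem toi_iff_pairwise_meetJoin {L A : Type*} [DistribLattice L] [Nonempty A]
    {n : ℕ} (hn : 2 ≤ n) (T : (Fin n → L) → A) :
    TotalOrderizationInvariant T ↔
      ∀ (x : Fin n → L) (i j : Fin n), i < j →
        T x = T (Function.update (Function.update x i (x i ⊓ x j)) j (x i ⊔ x j)) :=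
  toi_iff_pairwise_meetJoin_general T
end

section
/- Let T : L^n → M be a symmetric lattice n-homomorphism between distributive lattices, n ≥ 2, with diagonal P_T(x) := T(x,...,x). Then P_T is a lattice homomorphism if and only if for all x, y ∈ L and every k ∈ {1,...,n-1}, P_T(x) ∧ P_T(y) ≤ T(x^k, y^{n-k}) ≤ P_T(x) ∨ P_T(y), where T(x^k, y^{n-k}) denotes T with x in k arguments and y in n-k arguments. -/
/-- `T : Lⁿ → M` is a lattice n-homomorphism: in each coordinate separately it
preserves binary joins and binary meets. -/
def IsLatticeMultiHom {L M : Type*} [DistribLattice L] [DistribLattice M] {n : ℕ}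
    (T : (Fin n → L) → M) : Prop :=
  ∀ (x : Fin n → L) (i : Fin n) (y : L),
    T (Function.update x i (x i ⊔ y)) = T x ⊔ T (Function.update x i y) ∧
    T (Function.update x i (x i ⊓ y)) = T x ⊓ T (Function.update x i y)

/-- `P : L → M` is a lattice homomorphism. -/
def IsLatticeHomMap {L M : Type*} [DistribLattice L] [DistribLattice M] (P : L → M) : Prop :=
  ∀ a b : L, P (a ⊔ b) = P a ⊔ P b ∧ P (a ⊓ b) = P a ⊓ P b

/-!
Expanding `T (x ⊔ y, …, x ⊔ y)` one coordinate at a time writes it as the join of the values of `T`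
at all tuples with entries in `{x, y}`, and by symmetry each of these is some `T (xᵏ, yⁿ⁻ᵏ)`; dually
for meets. So `P_T (x ⊔ y) = ⨆ₖ T (xᵏ, yⁿ⁻ᵏ)`, whose extreme terms `k = n, 0` are `P_T x, P_T y`:
the bounds say exactly that the middle terms add nothing to this join (and dually to the meet).
Conversely they follow from monotonicity of `T` once `P_T` preserves `⊔` and `⊓`.
-/

theorem monotone_of_monotone_update {ι β : Type*} [Finite ι] [DecidableEq ι] {α : ι → Type*}
    [∀ i, Preorder (α i)] [Preorder β] {f : (∀ i, α i) → β}
    (hf : ∀ x i, Monotone fun y => f (Function.update x i y)) : Monotone f := by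
  have := Fintype.ofFinite ι
  intro a b hab
  suffices ∀ u : Finset ι, f a ≤ f (u.piecewise b a) by simpa using this Finset.univ
  intro u
  induction u using Finset.induction_on with
  | empty => simp
  | insert j u hj ih =>
    rw [Finset.piecewise_insert]
    refine ih.trans ?_
    conv_lhs => rw [← Function.update_eq_self j (u.piecewise b a)]
    exact hf _ j (by simpa [Finset.piecewise_eq_of_notMem _ _ _ hj] using hab j)

theorem IsSymmetricMap.exists_eq_apply_piecewise_lt {L A : Type*} {n : ℕ}
    {T : (Fin n → L) → A} (hsymm : IsSymmetricMap T) {x y : L} {z : Fin n → L}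
    (hz : ∀ i, z i = x ∨ z i = y) :
    ∃ k ≤ n, T z = T fun i => if i.1 < k then x else y := by
  classical
  set k := Fintype.card {i // z i = x}
  have hk : k ≤ n := (Fintype.card_subtype_le _).trans_eq (Fintype.card_fin n)
  let e : {i : Fin n // i.1 < k} ≃ {i // z i = x} :=
    Fintype.equivOfCardEq (Fintype.card_fin_lt_of_le hk)
  refine ⟨k, hk, ?_⟩
  rw [← hsymm e.extendSubtype z]
  congr 1
  funext i
  split_ifs with hi
  · exact e.extendSubtype_mem i hi
  · exact (hz _).resolve_left (e.extendSubtype_not_mem i hi)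

namespace IsLatticeMultiHom

variable {L M : Type*} [DistribLattice L] [DistribLattice M] {n : ℕ} {T : (Fin n → L) → M}

theorem dual (hT : IsLatticeMultiHom T) : IsLatticeMultiHom (L := Lᵒᵈ) (M := Mᵒᵈ) T :=
  fun x i y => (hT x i y).symm

theorem monotone (hT : IsLatticeMultiHom T) : Monotone T := by
  refine monotone_of_monotone_update fun x i y z hyz => ?_
  have h := (hT (Function.update x i y) i z).1
  simp only [Function.update_self, Function.update_idem, sup_eq_right.mpr hyz] at h
  exact le_sup_left.trans_eq h.symm

theorem apply_sup_le (hT : IsLatticeMultiHom T) {a b : Fin n → L} {c : M}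
    (h : ∀ z, (∀ i, z i = a i ∨ z i = b i) → T z ≤ c) : T (a ⊔ b) ≤ c := by
  classical
  suffices ∀ (u : Finset (Fin n)) (w : Fin n → L), (∀ i ∈ u, w i = a i ⊔ b i) →
      (∀ i ∉ u, w i = a i ∨ w i = b i) → T w ≤ c from
    this Finset.univ _ (fun _ _ => rfl) (by simp)
  intro u
  induction u using Finset.induction_on with
  | empty => exact fun w _ hw => h w fun i => hw i (Finset.notMem_empty i)
  | insert j u hj ih =>
    intro w hin hout
    set w' := Function.update w j (a j)
    have hw : w = Function.update w' j (w' j ⊔ b j) := by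
      simp [w', ← hin j (Finset.mem_insert_self j u)]
    have hin' : ∀ v, ∀ i ∈ u, Function.update w j v i = a i ⊔ b i := fun v i hi => by
      rw [Function.update_of_ne (ne_of_mem_of_not_mem hi hj)]
      exact hin i (Finset.mem_insert_of_mem hi)
    have hout' : ∀ v, v = a j ∨ v = b j → ∀ i ∉ u,
        Function.update w j v i = a i ∨ Function.update w j v i = b i := by
      intro v hv i hi
      rcases eq_or_ne i j with rfl | hij
      · simpa using hv
      · simpa [hij] using hout i (by simp [hij, hi])
    rw [hw, (hT w' j (b j)).1, Function.update_idem]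
    exact sup_le (ih w' (hin' _) (hout' _ (.inl rfl)))
      (ih _ (hin' _) (hout' _ (.inr rfl)))

theorem apply_const_sup_le (hT : IsLatticeMultiHom T)
    (hsymm : IsSymmetricMap T) {x y : L} {c : M}
    (h : ∀ k ≤ n, T (fun i => if i.1 < k then x else y) ≤ c) : T (fun _ => x ⊔ y) ≤ c :=
  hT.apply_sup_le (a := fun _ => x) (b := fun _ => y) fun _ hz => by
    obtain ⟨k, hk, hzk⟩ := hsymm.exists_eq_apply_piecewise_lt hz
    exact hzk ▸ h k hk

theorem le_apply_const_inf (hT : IsLatticeMultiHom T)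
    (hsymm : IsSymmetricMap T) {x y : L} {c : M}
    (h : ∀ k ≤ n, c ≤ T (fun i => if i.1 < k then x else y)) : c ≤ T (fun _ => x ⊓ y) :=
  hT.dual.apply_const_sup_le (L := Lᵒᵈ) (M := Mᵒᵈ) hsymm h

end IsLatticeMultiHom

theorem diagonal_latticeHom_iff_two_general {L M : Type*} [DistribLattice L] [DistribLattice M]
    {n : ℕ} (T : (Fin n → L) → M) (hT : IsLatticeMultiHom T)
    (hsymm : IsSymmetricMap T) :
    IsLatticeHomMap (fun x : L => T fun _ => x) ↔
      ∀ (x y : L) (k : ℕ), 1 ≤ k → k ≤ n - 1 →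
        ((T fun _ => x) ⊓ (T fun _ => y) ≤ T (fun i => if i.1 < k then x else y) ∧
         T (fun i => if i.1 < k then x else y) ≤ (T fun _ => x) ⊔ (T fun _ => y)) := by
  constructor
  · intro hP x y k _ _
    rw [← (hP x y).1, ← (hP x y).2]
    exact ⟨hT.monotone fun i => by split_ifs <;> simp,
      hT.monotone fun i => by split_ifs <;> simp⟩
  · intro h x y
    have hbounds : ∀ k ≤ n,
        (T fun _ => x) ⊓ (T fun _ => y) ≤ T (fun i => if i.1 < k then x else y) ∧
        T (fun i => if i.1 < k then x else y) ≤ (T fun _ => x) ⊔ (T fun _ => y) := by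
      intro k hk
      rcases Nat.eq_zero_or_pos k with rfl | hk0
      · simp
      rcases hk.eq_or_lt with rfl | hkn
      · simp
      exact h x y k hk0 (by omega)
    exact ⟨le_antisymm (hT.apply_const_sup_le hsymm fun k hk => (hbounds k hk).2)
        (sup_le (hT.monotone fun _ => le_sup_left) (hT.monotone fun _ => le_sup_right)),
      le_antisymm (le_inf (hT.monotone fun _ => inf_le_left) (hT.monotone fun _ => inf_le_right))
        (hT.le_apply_const_inf hsymm fun k hk => (hbounds k hk).1)⟩

/-- The diagonal of a symmetric lattice n-homomorphism is a lattice homomorphism iff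
P_T(x) ⊓ P_T(y) ≤ T(xᵏ, yⁿ⁻ᵏ) ≤ P_T(x) ⊔ P_T(y) for all x, y and 1 ≤ k ≤ n-1. -/
theorem diagonal_latticeHom_iff_two {L M : Type*} [DistribLattice L] [DistribLattice M]
    {n : ℕ} (hn : 2 ≤ n) (T : (Fin n → L) → M) (hT : IsLatticeMultiHom T)
    (hsymm : IsSymmetricMap T) :
    IsLatticeHomMap (fun x : L => T fun _ => x) ↔
      ∀ (x y : L) (k : ℕ), 1 ≤ k → k ≤ n - 1 →
        ((T fun _ => x) ⊓ (T fun _ => y) ≤ T (fun i => if i.1 < k then x else y) ∧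
         T (fun i => if i.1 < k then x else y) ≤ (T fun _ => x) ⊔ (T fun _ => y)) :=
  diagonal_latticeHom_iff_two_general T hT hsymm
end

section
/- Let T : L^n → M be a symmetric lattice n-homomorphism between distributive lattices, n ≥ 2, and let j, m, p satisfy 1 ≤ m ≤ p ≤ p + j ≤ n - 1. Then for all x, y ∈ L: ⋁_{i=m}^{p} T(x^i, y^{n-i-j}, (x∧y)^j) = ⋁_{i=m-1}^{p} T(x^i, y^{n-i-j-1}, (x∧y)^{j+1}), where T(a^r, b^s, c^t) denotes T applied with a repeated r times, b repeated s times, and c repeated t times (r+s+t = n). -/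
/-!
Write `a i` for `T(xⁱ, yⁿ⁻ⁱ⁻ʲ, (x ⊓ y)ʲ)`. Splitting the last `y` of `a k` by multilinearity and
using symmetry gives `T(xᵏ, yⁿ⁻ᵏ⁻ʲ⁻¹, (x ⊓ y)ʲ⁺¹) = a k ⊓ a (k + 1)`, so the right-hand side is
`⋁_{k=m-1}^{p} a k ⊓ a (k + 1)`. Conversely `a i ≤ a (i - 1) ⊔ a (i + 1)`: this is the inequality
`F x y ≤ F x x ⊔ F y y` for a symmetric map `F` of two variables that is a lattice homomorphism in
each (expand `F (x ⊓ y) (x ⊔ y)` in the two possible orders), applied to the coordinates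
`i - 1` and `i`. By distributivity every `a i` with `m ≤ i ≤ p` is then the join
`(a (i - 1) ⊓ a i) ⊔ (a i ⊓ a (i + 1))` of two terms of the right-hand side.
-/

open Finset Function

theorem IsSymmetricMap.apply_update_update_comm {L A : Type*} {n : ℕ} {T : (Fin n → L) → A}
    (hT : IsSymmetricMap T) {c d : Fin n} (hcd : c ≠ d) (w : Fin n → L) (a b : L) :
    T (update (update w c a) d b) = T (update (update w c b) d a) := by
  rw [← hT (Equiv.swap c d)]
  congr 1
  ext t
  simp only [comp_apply, Equiv.swap_apply_def, update_apply]
  split_ifs <;> simp_all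

section LatticeHom

variable {L M : Type*} [DistribLattice L] [DistribLattice M]

theorem le_sup_of_isLatticeHomMap_left_right (F : L → L → M)
    (hl : ∀ v, IsLatticeHomMap (F · v)) (hr : ∀ u, IsLatticeHomMap (F u)) {x y : L}
    (hF : F y x = F x y) : F x y ≤ F x x ⊔ F y y := by
  simp only [IsLatticeHomMap] at hl hr
  have expand_right_first : F (x ⊓ y) (x ⊔ y) = F x x ⊓ F y x ⊔ F x y ⊓ F y y := by
    rw [(hr _ x y).1, (hl x x y).2, (hl y x y).2]
  have expand_left_first : F (x ⊓ y) (x ⊔ y) = (F x x ⊔ F x y) ⊓ (F y x ⊔ F y y) := by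
    rw [(hl _ x y).2, (hr x x y).1, (hr y x y).1]
  calc F x y ≤ (F x x ⊔ F x y) ⊓ (F y x ⊔ F y y) := by
        rw [hF]; exact le_inf le_sup_right le_sup_left
    _ = F x x ⊓ F y x ⊔ F x y ⊓ F y y := by rw [← expand_left_first, expand_right_first]
    _ ≤ F x x ⊔ F y y := sup_le_sup inf_le_left inf_le_right

variable {n : ℕ} {T : (Fin n → L) → M}

theorem IsLatticeMultiHom.isLatticeHomMap_update (hT : IsLatticeMultiHom T) (w : Fin n → L)
    (i : Fin n) : IsLatticeHomMap fun a => T (update w i a) := fun a b => by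
  simpa only [update_idem, update_self] using hT (update w i a) i b

theorem IsLatticeMultiHom.apply_update_update_le (hT : IsLatticeMultiHom T)
    (hsymm : IsSymmetricMap T) {c d : Fin n} (hcd : c ≠ d) (w : Fin n → L) (x y : L) :
    T (update (update w c x) d y) ≤
      T (update (update w c x) d x) ⊔ T (update (update w c y) d y) :=
  le_sup_of_isLatticeHomMap_left_right (fun u v => T (update (update w c u) d v))
    (fun v => by simpa only [update_comm hcd] using hT.isLatticeHomMap_update (update w d v) c)
    (fun u => hT.isLatticeHomMap_update _ d) (hsymm.apply_update_update_comm hcd w y x)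

end LatticeHom

/-- `blockVec n j i x y` is `(xⁱ, yⁿ⁻ⁱ⁻ʲ, (x ⊓ y)ʲ)`. -/
def blockVec {L : Type*} [Min L] (n j i : ℕ) (x y : L) : Fin n → L :=
  fun t => if t.1 < i then x else if t.1 < n - j then y else x ⊓ y

section BlockVec

variable {L M : Type*} [DistribLattice L] [DistribLattice M] {n : ℕ} {T : (Fin n → L) → M}

theorem IsLatticeMultiHom.apply_blockVec_succ_eq_inf (hT : IsLatticeMultiHom T)
    (hsymm : IsSymmetricMap T) {j k : ℕ} (hk : k + j < n) (x y : L) :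
    T (blockVec n (j + 1) k x y) = T (blockVec n j k x y) ⊓ T (blockVec n j (k + 1) x y) := by
  obtain ⟨c, hc⟩ : ∃ c : Fin n, c.1 = n - j - 1 := ⟨⟨n - j - 1, by omega⟩, rfl⟩
  obtain ⟨d, hd⟩ : ∃ d : Fin n, d.1 = k := ⟨⟨k, by omega⟩, rfl⟩
  have inf_at_c : blockVec n (j + 1) k x y = update (blockVec n j k x y) c (x ⊓ y) := by
    ext t
    simp only [blockVec, update_apply, Fin.ext_iff]
    split_ifs <;> first | rfl | omega
  have y_at_c : update (blockVec n j k x y) c y = blockVec n j k x y := by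
    ext t
    simp only [blockVec, update_apply, Fin.ext_iff]
    split_ifs <;> first | rfl | omega
  have x_at_c : update (blockVec n j k x y) c x = blockVec n j (k + 1) x y ∘ Equiv.swap d c := by
    ext t
    simp only [blockVec, update_apply, comp_apply, Equiv.swap_apply_def, Fin.ext_iff]
    split_ifs <;> first | rfl | omega
  calc T (blockVec n (j + 1) k x y)
      = T (update (blockVec n j k x y) c x) ⊓ T (update (blockVec n j k x y) c y) := by
        rw [inf_at_c]; exact (hT.isLatticeHomMap_update _ c x y).2
    _ = T (blockVec n j k x y) ⊓ T (blockVec n j (k + 1) x y) := by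
        rw [y_at_c, x_at_c, hsymm, inf_comm]

theorem IsLatticeMultiHom.apply_blockVec_le_sup (hT : IsLatticeMultiHom T)
    (hsymm : IsSymmetricMap T) {j i : ℕ} (hi : 1 ≤ i) (hin : i + j < n) (x y : L) :
    T (blockVec n j i x y) ≤ T (blockVec n j (i - 1) x y) ⊔ T (blockVec n j (i + 1) x y) := by
  obtain ⟨c, hc⟩ : ∃ c : Fin n, c.1 = i - 1 := ⟨⟨i - 1, by omega⟩, rfl⟩
  obtain ⟨d, hd⟩ : ∃ d : Fin n, d.1 = i := ⟨⟨i, by omega⟩, rfl⟩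
  have hcd : c ≠ d := Fin.ne_of_val_ne (by omega)
  have h := hT.apply_update_update_le hsymm hcd (blockVec n j i x y) x y
  have unchanged : update (update (blockVec n j i x y) c x) d y = blockVec n j i x y := by
    ext t
    simp only [blockVec, update_apply, Fin.ext_iff]
    split_ifs <;> first | rfl | omega
  have both_x : update (update (blockVec n j i x y) c x) d x = blockVec n j (i + 1) x y := by
    ext t
    simp only [blockVec, update_apply, Fin.ext_iff]
    split_ifs <;> first | rfl | omega
  have both_y : update (update (blockVec n j i x y) c y) d y = blockVec n j (i - 1) x y := by
    ext t
    simp only [blockVec, update_apply, Fin.ext_iff]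
    split_ifs <;> first | rfl | omega
  rwa [unchanged, both_x, both_y, sup_comm] at h

end BlockVec

theorem Finset.sup'_Icc_eq_sup'_Icc_inf_succ {M : Type*} [DistribLattice M] (a : ℕ → M)
    {m p : ℕ} (hm : 1 ≤ m) (hmp : m ≤ p) (ha : ∀ i ∈ Icc m p, a i ≤ a (i - 1) ⊔ a (i + 1)) :
    (Icc m p).sup' (nonempty_Icc.mpr hmp) a =
      (Icc (m - 1) p).sup' (nonempty_Icc.mpr (by omega)) fun k => a k ⊓ a (k + 1) := by
  apply le_antisymm
  · refine sup'_le _ _ fun i hi => ?_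
    obtain ⟨him, hip⟩ := mem_Icc.mp hi
    have a_eq_sup : a i = a (i - 1) ⊓ a i ⊔ a i ⊓ a (i + 1) := by
      rw [inf_comm, ← inf_sup_left, inf_eq_left.mpr (ha i hi)]
    rw [a_eq_sup]
    refine sup_le ?_ (le_sup' (fun k => a k ⊓ a (k + 1)) (mem_Icc.mpr ⟨by omega, hip⟩))
    have := le_sup' (fun k => a k ⊓ a (k + 1))
      (mem_Icc.mpr ⟨by omega, by omega⟩ : i - 1 ∈ Icc (m - 1) p)
    rwa [Nat.sub_add_cancel (by omega)] at this
  · refine sup'_le _ _ fun k hk => ?_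
    obtain ⟨hk1, hk2⟩ := mem_Icc.mp hk
    rcases lt_or_ge k m with hkm | hkm
    · obtain rfl : m = k + 1 := by omega
      exact inf_le_right.trans (le_sup' a (mem_Icc.mpr ⟨le_rfl, hmp⟩))
    · exact inf_le_left.trans (le_sup' a (mem_Icc.mpr ⟨hkm, hk2⟩))

/-- For a symmetric lattice n-homomorphism T and 1 ≤ m ≤ p ≤ p + j ≤ n - 1,
⋁_{i=m}^{p} T(xⁱ, yⁿ⁻ⁱ⁻ʲ, (x⊓y)ʲ) = ⋁_{i=m-1}^{p} T(xⁱ, yⁿ⁻ⁱ⁻ʲ⁻¹, (x⊓y)ʲ⁺¹). -/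
theorem symm_multiHom_sup_shift {L M : Type*} [DistribLattice L] [DistribLattice M]
    {n : ℕ} (T : (Fin n → L) → M) (hT : IsLatticeMultiHom T)
    (hsymm : IsSymmetricMap T) (j m p : ℕ) (hm : 1 ≤ m) (hmp : m ≤ p)
    (hpn : p + j ≤ n - 1) (x y : L) :
    ((Finset.Icc m p).sup' (Finset.nonempty_Icc.mpr hmp)
        (fun i => T fun t => if t.1 < i then x else if t.1 < n - j then y else x ⊓ y)) =
      (Finset.Icc (m - 1) p).sup' (Finset.nonempty_Icc.mpr (by omega))
        (fun i => T fun t =>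
          if t.1 < i then x else if t.1 < n - (j + 1) then y else x ⊓ y) := by
  calc (Icc m p).sup' _ (fun i => T (blockVec n j i x y))
      = (Icc (m - 1) p).sup' _
          (fun k => T (blockVec n j k x y) ⊓ T (blockVec n j (k + 1) x y)) :=
        sup'_Icc_eq_sup'_Icc_inf_succ _ hm hmp fun i hi =>
          hT.apply_blockVec_le_sup hsymm (hm.trans (mem_Icc.mp hi).1)
            (by have := (mem_Icc.mp hi).2; omega) x y
    _ = (Icc (m - 1) p).sup' _ (fun k => T (blockVec n (j + 1) k x y)) :=
        sup'_congr _ rfl fun k hk =>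
          (hT.apply_blockVec_succ_eq_inf hsymm (by have := (mem_Icc.mp hk).2; omega) x y).symm
end
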